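/- Let G = (X, Y, E) be a bipartite graph and let Ê be a set of edges disjoint from E satisfying the strong benefit guarantee (every subset F̂ ⊆ Ê has all its X-endpoints in Γ(E ∪ F̂)) and minimality (μ(E ∪ (Ê \ {e})) < μ(E ∪ Ê) for all e ∈ Ê). Then every maximum matching of (X, Y, E ∪ Ê) contains all edges of Ê and contains a maximum matching of (X, Y, E) as a subset. -/
import Mathlib


open Finset

variable {α β : Type*}

/-- A matching: no two distinct edges share an X-endpoint or a Y-endpoint. -/
def IsMatching (M : Finset (α × β)) : Prop :=
  (∀ e ∈ M, ∀ f ∈ M, e.1 = f.1 → e = f) ∧ (∀ e ∈ M, ∀ f ∈ M, e.2 = f.2 → e = f)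

/-- `M` is a maximum (cardinality) matching of the bipartite graph with edge set `E`. -/
def IsMaxMatching (E M : Finset (α × β)) : Prop :=
  M ⊆ E ∧ IsMatching M ∧ ∀ M', M' ⊆ E → IsMatching M' → M'.card ≤ M.card

open Classical in
/-- μ(E): size of a maximum matching of the bipartite graph with edge set `E`. -/
noncomputable def mu (E : Finset (α × β)) : ℕ :=
  (E.powerset.filter IsMatching).sup Finset.card

/-- The X-vertex `x` is matched (participates) in `M`. -/
def Matched (M : Finset (α × β)) (x : α) : Prop := ∃ y, (x, y) ∈ M

/-- `x` participates in all maximum matchings of `(X, Y, E)` (i.e. `x ∈ Γ(E)`). -/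
def InAllMax (E : Finset (α × β)) (x : α) : Prop :=
  ∀ M, IsMaxMatching E M → Matched M x

section Helpers

lemma matching_mono {M M' : Finset (α × β)} (h : IsMatching M) (hs : M' ⊆ M) :
    IsMatching M' :=
  ⟨fun e he f hf => h.1 e (hs he) f (hs hf), fun e he f hf => h.2 e (hs he) f (hs hf)⟩

lemma card_image_fst {M : Finset (α × β)} [DecidableEq α] (h : IsMatching M) :
    (M.image Prod.fst).card = M.card :=
  Finset.card_image_of_injOn (fun e he f hf hef => h.1 e he f hf hef)

lemma card_image_snd {M : Finset (α × β)} [DecidableEq β] (h : IsMatching M) :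
    (M.image Prod.snd).card = M.card :=
  Finset.card_image_of_injOn (fun e he f hf hef => h.2 e he f hf hef)

lemma image_fst_erase {M : Finset (α × β)} [DecidableEq α] [DecidableEq β]
    (h : IsMatching M) {f : α × β} (hf : f ∈ M) :
    (M.erase f).image Prod.fst = (M.image Prod.fst).erase f.1 := by
  ext x
  simp only [Finset.mem_image, Finset.mem_erase]
  constructor
  · rintro ⟨e, ⟨hne, he⟩, rfl⟩
    exact ⟨fun hx => hne (h.1 e he f hf hx), e, he, rfl⟩
  · rintro ⟨hx, e, he, rfl⟩
    exact ⟨e, ⟨fun hef => hx (by rw [hef]), he⟩, rfl⟩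

lemma image_snd_erase {M : Finset (α × β)} [DecidableEq α] [DecidableEq β]
    (h : IsMatching M) {f : α × β} (hf : f ∈ M) :
    (M.erase f).image Prod.snd = (M.image Prod.snd).erase f.2 := by
  ext y
  simp only [Finset.mem_image, Finset.mem_erase]
  constructor
  · rintro ⟨e, ⟨hne, he⟩, rfl⟩
    exact ⟨fun hy => hne (h.2 e he f hf hy), e, he, rfl⟩
  · rintro ⟨hy, e, he, rfl⟩
    exact ⟨e, ⟨fun hef => hy (by rw [hef]), he⟩, rfl⟩

lemma matching_insert {M : Finset (α × β)} [DecidableEq α] [DecidableEq β]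
    (h : IsMatching M) {e : α × β}
    (h1 : e.1 ∉ M.image Prod.fst) (h2 : e.2 ∉ M.image Prod.snd) :
    IsMatching (insert e M) := by
  have key1 : ∀ p ∈ M, p.1 ≠ e.1 := fun p hp hpe => h1 (Finset.mem_image.2 ⟨p, hp, hpe⟩)
  have key2 : ∀ p ∈ M, p.2 ≠ e.2 := fun p hp hpe => h2 (Finset.mem_image.2 ⟨p, hp, hpe⟩)
  constructor
  · intro p hp q hq hpq
    rcases Finset.mem_insert.1 hp with hp' | hp' <;> rcases Finset.mem_insert.1 hq with hq' | hq'
    · rw [hp', hq']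
    · exact absurd (hpq.symm.trans (congrArg Prod.fst hp')) (key1 q hq')
    · exact absurd (hpq.trans (congrArg Prod.fst hq')) (key1 p hp')
    · exact h.1 p hp' q hq' hpq
  · intro p hp q hq hpq
    rcases Finset.mem_insert.1 hp with hp' | hp' <;> rcases Finset.mem_insert.1 hq with hq' | hq'
    · rw [hp', hq']
    · exact absurd (hpq.symm.trans (congrArg Prod.snd hp')) (key2 q hq')
    · exact absurd (hpq.trans (congrArg Prod.snd hq')) (key2 p hp')
    · exact h.2 p hp' q hq' hpq

lemma card_le_mu {E M : Finset (α × β)} (hME : M ⊆ E) (hm : IsMatching M) :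
    M.card ≤ mu E := by
  classical
  unfold mu
  apply Finset.le_sup
  rw [Finset.mem_filter, Finset.mem_powerset]
  exact ⟨hME, hm⟩

lemma max_card_eq_mu {E M : Finset (α × β)} (h : IsMaxMatching E M) : M.card = mu E := by
  classical
  refine le_antisymm (card_le_mu h.1 h.2.1) ?_
  unfold mu
  apply Finset.sup_le
  intro b hb
  rw [Finset.mem_filter, Finset.mem_powerset] at hb
  exact h.2.2 b hb.1 hb.2

lemma exists_maxMatching (E : Finset (α × β)) : ∃ M, IsMaxMatching E M := by
  classical
  have hne : (E.powerset.filter IsMatching).Nonempty := by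
    refine ⟨∅, ?_⟩
    rw [Finset.mem_filter, Finset.mem_powerset]
    exact ⟨Finset.empty_subset E, ⟨by simp, by simp⟩⟩
  obtain ⟨M, hM, hsup⟩ := Finset.exists_mem_eq_sup _ hne Finset.card
  rw [Finset.mem_filter, Finset.mem_powerset] at hM
  refine ⟨M, hM.1, hM.2, fun M' h1 h2 => ?_⟩
  calc M'.card ≤ mu E := card_le_mu h1 h2
  _ ≤ M.card := by
      unfold mu
      rw [hsup]

/-- Any maximum matching of `E ∪ Ehat` must contain all of `Ehat`, by minimality. -/
lemma ehat_subset_of_max [DecidableEq α] [DecidableEq β] {E Ehat : Finset (α × β)}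
    (hmin : ∀ e ∈ Ehat, mu (E ∪ Ehat.erase e) < mu (E ∪ Ehat)) :
    ∀ M, IsMaxMatching (E ∪ Ehat) M → Ehat ⊆ M := by
  intro M hM e he
  by_contra hem
  have hsub : M ⊆ E ∪ Ehat.erase e := by
    intro f hf
    rcases Finset.mem_union.1 (hM.1 hf) with h | h
    · exact Finset.mem_union_left _ h
    · exact Finset.mem_union_right _ (Finset.mem_erase.2 ⟨fun hfe => hem (hfe ▸ hf), h⟩)
  have h1 : M.card ≤ mu (E ∪ Ehat.erase e) := card_le_mu hsub hM.2.1
  have h2 := max_card_eq_mu hM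
  have h3 := hmin e he
  omega

/-- Augmentation: given matchings `A`, `B` with `|A| < |B|`, there is a matching `A'` of size
`|A| + 1` inside `A ∪ B` covering exactly the vertices of `A` plus one new X-vertex and one
new Y-vertex (both covered by `B`). -/
lemma aug [DecidableEq α] [DecidableEq β] :
    ∀ A B : Finset (α × β), IsMatching A → IsMatching B →
    A.card < B.card →
    ∃ A' a b, A' ⊆ A ∪ B ∧ IsMatching A' ∧ A'.card = A.card + 1 ∧
      a ∈ B.image Prod.fst ∧ a ∉ A.image Prod.fst ∧
      b ∈ B.image Prod.snd ∧ b ∉ A.image Prod.snd ∧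
      A'.image Prod.fst = insert a (A.image Prod.fst) ∧
      A'.image Prod.snd = insert b (A.image Prod.snd) := by
  intro A
  induction A using Finset.strongInduction with
  | _ A ih =>
    intro B hA hB hlt
    have hcard : (A.image Prod.fst).card < (B.image Prod.fst).card := by
      rw [card_image_fst hA, card_image_fst hB]; exact hlt
    obtain ⟨x₀, hx₀B, hx₀A⟩ : ∃ x, x ∈ B.image Prod.fst ∧ x ∉ A.image Prod.fst := by
      by_contra hcon
      push_neg at hcon
      exact absurd (Finset.card_le_card hcon) (not_le.2 hcard)
    obtain ⟨e, heB, hex⟩ := Finset.mem_image.1 hx₀B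
    subst hex
    by_cases h2 : e.2 ∈ A.image Prod.snd
    · -- recursive case: e's Y-endpoint is covered by A via edge f
      obtain ⟨f, hfA, hfe⟩ := Finset.mem_image.1 h2
      have hf1 : f.1 ≠ e.1 := fun hf1 => hx₀A (Finset.mem_image.2 ⟨f, hfA, hf1⟩)
      have hAe : IsMatching (A.erase f) := matching_mono hA (Finset.erase_subset _ _)
      have hBe : IsMatching (B.erase e) := matching_mono hB (Finset.erase_subset _ _)
      have hApos : 0 < A.card := Finset.card_pos.2 ⟨f, hfA⟩
      have hclt : (A.erase f).card < (B.erase e).card := by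
        rw [Finset.card_erase_of_mem hfA, Finset.card_erase_of_mem heB]; omega
      obtain ⟨A'', a, b, hsub, hm'', hcard'', haB, haA, hbB, hbA, hXeq, hYeq⟩ :=
        ih (A.erase f) (Finset.erase_ssubset hfA) (B.erase e) hAe hBe hclt
      rw [image_fst_erase hA hfA] at haA hXeq
      rw [image_snd_erase hA hfA] at hbA hYeq
      rw [image_fst_erase hB heB] at haB
      rw [image_snd_erase hB heB] at hbB
      have hane : a ≠ e.1 := (Finset.mem_erase.1 haB).1
      have hbne : b ≠ e.2 := (Finset.mem_erase.1 hbB).1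
      have haB' : a ∈ B.image Prod.fst := (Finset.mem_erase.1 haB).2
      have hbB' : b ∈ B.image Prod.snd := (Finset.mem_erase.1 hbB).2
      have hbA' : b ∉ A.image Prod.snd := fun hb =>
        hbA (Finset.mem_erase.2 ⟨by rw [← hfe] at hbne; exact hbne, hb⟩)
      have hsub' : A'' ⊆ A ∪ B :=
        hsub.trans (Finset.union_subset_union (Finset.erase_subset _ _) (Finset.erase_subset _ _))
      have hf1X : f.1 ∈ A.image Prod.fst := Finset.mem_image.2 ⟨f, hfA, rfl⟩
      by_cases haf : a = f.1
      · -- close the alternation with edge e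
        refine ⟨insert e A'', e.1, b, ?_, ?_, ?_, hx₀B, hx₀A, hbB', hbA', ?_, ?_⟩
        · exact Finset.insert_subset (Finset.mem_union_right _ heB) hsub'
        · refine matching_insert hm'' ?_ ?_
          · rw [hXeq]
            intro hmem
            rcases Finset.mem_insert.1 hmem with h | h
            · exact hane h.symm
            · exact hx₀A (Finset.mem_of_mem_erase h)
          · rw [hYeq]
            intro hmem
            rcases Finset.mem_insert.1 hmem with h | h
            · exact hbne h.symm
            · exact (Finset.mem_erase.1 h).1 hfe.symm
        · have heA'' : e ∉ A'' := by
            intro hmem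
            have hmem' : e.1 ∈ A''.image Prod.fst := Finset.mem_image.2 ⟨e, hmem, rfl⟩
            rw [hXeq] at hmem'
            rcases Finset.mem_insert.1 hmem' with h | h
            · exact hane h.symm
            · exact hx₀A (Finset.mem_of_mem_erase h)
          rw [Finset.card_insert_of_notMem heA'', hcard'',
            Finset.card_erase_of_mem hfA]
          omega
        · rw [Finset.image_insert, hXeq, haf, Finset.insert_erase hf1X]
        · rw [Finset.image_insert, hYeq, Finset.insert_comm, ← hfe,
            Finset.insert_erase (Finset.mem_image.2 ⟨f, hfA, rfl⟩)]
      · -- reinsert edge f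
        refine ⟨insert f A'', a, b, ?_, ?_, ?_, haB', ?_, hbB', hbA', ?_, ?_⟩
        · exact Finset.insert_subset (Finset.mem_union_left _ hfA) hsub'
        · refine matching_insert hm'' ?_ ?_
          · rw [hXeq]
            intro hmem
            rcases Finset.mem_insert.1 hmem with h | h
            · exact haf h.symm
            · exact (Finset.mem_erase.1 h).1 rfl
          · rw [hYeq]
            intro hmem
            rcases Finset.mem_insert.1 hmem with h | h
            · exact hbne (h.symm.trans hfe)
            · exact (Finset.mem_erase.1 h).1 rfl
        · have hfA'' : f ∉ A'' := by
            intro hmem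
            have hmem' : f.1 ∈ A''.image Prod.fst := Finset.mem_image.2 ⟨f, hmem, rfl⟩
            rw [hXeq] at hmem'
            rcases Finset.mem_insert.1 hmem' with h | h
            · exact haf h.symm
            · exact (Finset.mem_erase.1 h).1 rfl
          rw [Finset.card_insert_of_notMem hfA'', hcard'',
            Finset.card_erase_of_mem hfA]
          omega
        · intro ha
          exact haA (Finset.mem_erase.2 ⟨haf, ha⟩)
        · rw [Finset.image_insert, hXeq, Finset.insert_comm, Finset.insert_erase hf1X]
        · rw [Finset.image_insert, hYeq, Finset.insert_comm,
            Finset.insert_erase (Finset.mem_image.2 ⟨f, hfA, rfl⟩)]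
    · -- base case: e is free on both sides
      have heA : e ∉ A := fun hmem => hx₀A (Finset.mem_image.2 ⟨e, hmem, rfl⟩)
      refine ⟨insert e A, e.1, e.2, Finset.insert_subset (Finset.mem_union_right _ heB)
        Finset.subset_union_left, matching_insert hA hx₀A h2,
        Finset.card_insert_of_notMem heA, hx₀B, hx₀A,
        Finset.mem_image.2 ⟨e, heB, rfl⟩, h2, ?_, ?_⟩
      · rw [Finset.image_insert]
      · rw [Finset.image_insert]

end Helpers

/-- Under the strong benefit guarantee and minimality of `Ê` (disjoint from `E`), every maximum
matching of `(X,Y,E ∪ Ê)` contains all edges of `Ê` and contains a maximum matching of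
`(X,Y,E)` as a subset. -/
theorem stmt_8 [DecidableEq α] [DecidableEq β] (E Ehat : Finset (α × β))
    (hdisj : ∀ e ∈ Ehat, e ∉ E)
    (hSB : ∀ F ⊆ Ehat, ∀ e ∈ F, InAllMax (E ∪ F) e.1)
    (hmin : ∀ e ∈ Ehat, mu (E ∪ Ehat.erase e) < mu (E ∪ Ehat)) :
    ∀ M, IsMaxMatching (E ∪ Ehat) M →
      Ehat ⊆ M ∧ ∃ M₀, M₀ ⊆ M ∧ IsMaxMatching E M₀ := by
  intro M hM
  have hEhatM : Ehat ⊆ M := ehat_subset_of_max hmin M hM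
  have hmEhat : IsMatching Ehat := matching_mono hM.2.1 hEhatM
  refine ⟨hEhatM, M \ Ehat, Finset.sdiff_subset, ?_⟩
  have hM₀E : M \ Ehat ⊆ E := by
    intro f hf
    rcases Finset.mem_union.1 (hM.1 (Finset.mem_sdiff.1 hf).1) with h | h
    · exact h
    · exact absurd h (Finset.mem_sdiff.1 hf).2
  have hm₀ : IsMatching (M \ Ehat) := matching_mono hM.2.1 Finset.sdiff_subset
  refine ⟨hM₀E, hm₀, fun M' hM'E hM' => le_trans (card_le_mu hM'E hM') ?_⟩
  by_contra hlt
  push_neg at hlt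
  obtain ⟨N, hN⟩ := exists_maxMatching E
  have hNcard : N.card = mu E := max_card_eq_mu hN
  have hltN : (M \ Ehat).card < N.card := by omega
  obtain ⟨A', a, b, hsub, hmA', hcardA', haB, haA, hbB, hbA, hXeq, hYeq⟩ :=
    aug (M \ Ehat) N hm₀ hN.2.1 hltN
  have hA'E : A' ⊆ E := fun p hp => by
    rcases Finset.mem_union.1 (hsub hp) with h | h
    · exact hM₀E h
    · exact hN.1 h
  set Ea : Finset (α × β) := Ehat.filter (fun g => g.1 = a) with hEa
  set Eb : Finset (α × β) := Ehat.filter (fun g => g.2 = b) with hEb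
  set M'' : Finset (α × β) := A' ∪ (Ehat \ (Ea ∪ Eb)) with hM''
  -- no Ehat edge shares an endpoint with M \ Ehat
  have hshare1 : ∀ g ∈ Ehat, ∀ h ∈ M \ Ehat, g.1 ≠ h.1 := by
    intro g hg h hh hgh
    have := hM.2.1.1 g (hEhatM hg) h (Finset.mem_sdiff.1 hh).1 hgh
    exact (Finset.mem_sdiff.1 hh).2 (this ▸ hg)
  have hshare2 : ∀ g ∈ Ehat, ∀ h ∈ M \ Ehat, g.2 ≠ h.2 := by
    intro g hg h hh hgh
    have := hM.2.1.2 g (hEhatM hg) h (Finset.mem_sdiff.1 hh).1 hgh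
    exact (Finset.mem_sdiff.1 hh).2 (this ▸ hg)
  -- cross conflicts between A' and the kept Ehat edges are impossible
  have hcross1 : ∀ p ∈ A', ∀ q ∈ Ehat \ (Ea ∪ Eb), p.1 ≠ q.1 := by
    intro p hp q hq hpq
    obtain ⟨hqE, hqn⟩ := Finset.mem_sdiff.1 hq
    have hp1 : p.1 ∈ insert a ((M \ Ehat).image Prod.fst) := by
      rw [← hXeq]; exact Finset.mem_image.2 ⟨p, hp, rfl⟩
    rcases Finset.mem_insert.1 hp1 with h | h
    · exact hqn (Finset.mem_union_left _ (Finset.mem_filter.2 ⟨hqE, by rw [← hpq, h]⟩))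
    · obtain ⟨r, hr, hrq⟩ := Finset.mem_image.1 h
      exact hshare1 q hqE r hr (by rw [← hpq, hrq])
  have hcross2 : ∀ p ∈ A', ∀ q ∈ Ehat \ (Ea ∪ Eb), p.2 ≠ q.2 := by
    intro p hp q hq hpq
    obtain ⟨hqE, hqn⟩ := Finset.mem_sdiff.1 hq
    have hp2 : p.2 ∈ insert b ((M \ Ehat).image Prod.snd) := by
      rw [← hYeq]; exact Finset.mem_image.2 ⟨p, hp, rfl⟩
    rcases Finset.mem_insert.1 hp2 with h | h
    · exact hqn (Finset.mem_union_right _ (Finset.mem_filter.2 ⟨hqE, by rw [← hpq, h]⟩))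
    · obtain ⟨r, hr, hrq⟩ := Finset.mem_image.1 h
      exact hshare2 q hqE r hr (by rw [← hpq, hrq])
  have hm'' : IsMatching M'' := by
    constructor
    · intro p hp q hq hpq
      rcases Finset.mem_union.1 hp with hp' | hp' <;> rcases Finset.mem_union.1 hq with hq' | hq'
      · exact hmA'.1 p hp' q hq' hpq
      · exact absurd hpq (hcross1 p hp' q hq')
      · exact absurd hpq.symm (hcross1 q hq' p hp')
      · exact hmEhat.1 p (Finset.mem_sdiff.1 hp').1 q (Finset.mem_sdiff.1 hq').1 hpq
    · intro p hp q hq hpq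
      rcases Finset.mem_union.1 hp with hp' | hp' <;> rcases Finset.mem_union.1 hq with hq' | hq'
      · exact hmA'.2 p hp' q hq' hpq
      · exact absurd hpq (hcross2 p hp' q hq')
      · exact absurd hpq.symm (hcross2 q hq' p hp')
      · exact hmEhat.2 p (Finset.mem_sdiff.1 hp').1 q (Finset.mem_sdiff.1 hq').1 hpq
  have hdisjA' : Disjoint A' (Ehat \ (Ea ∪ Eb)) := by
    rw [Finset.disjoint_left]
    intro p hp hp'
    exact hdisj p (Finset.mem_sdiff.1 hp').1 (hA'E hp)
  have hEabsub : Ea ∪ Eb ⊆ Ehat :=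
    Finset.union_subset (Finset.filter_subset _ _) (Finset.filter_subset _ _)
  have hcardM'' : M''.card = (M \ Ehat).card + 1 + Ehat.card - (Ea ∪ Eb).card := by
    rw [hM'', Finset.card_union_of_disjoint hdisjA', hcardA',
      Finset.card_sdiff_of_subset hEabsub]
    have : (Ea ∪ Eb).card ≤ Ehat.card := Finset.card_le_card hEabsub
    omega
  have hMcard : M.card = (M \ Ehat).card + Ehat.card := by
    rw [Finset.card_sdiff_of_subset hEhatM]
    have := Finset.card_le_card hEhatM
    omega
  have hMmu : M.card = mu (E ∪ Ehat) := max_card_eq_mu hM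
  have hM''sub : M'' ⊆ E ∪ Ehat := by
    intro p hp
    rcases Finset.mem_union.1 hp with h | h
    · exact Finset.mem_union_left _ (hA'E h)
    · exact Finset.mem_union_right _ (Finset.mem_sdiff.1 h).1
  have hEacard : Ea.card ≤ 1 := by
    rw [Finset.card_le_one]
    intro p hp q hq
    rw [hEa, Finset.mem_filter] at hp hq
    exact hmEhat.1 p hp.1 q hq.1 (hp.2.trans hq.2.symm)
  have hEbcard : Eb.card ≤ 1 := by
    rw [Finset.card_le_one]
    intro p hp q hq
    rw [hEb, Finset.mem_filter] at hp hq
    exact hmEhat.2 p hp.1 q hq.1 (hp.2.trans hq.2.symm)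
  have hM''le : M''.card ≤ M.card := hMmu ▸ card_le_mu hM''sub hm''
  have hkle : (Ea ∪ Eb).card ≤ 2 := le_trans (Finset.card_union_le _ _) (by omega)
  -- case analysis on how many Ehat edges were displaced
  interval_cases hk : (Ea ∪ Eb).card
  · -- 0 displaced : M'' is bigger than M, contradiction
    omega
  · -- 1 displaced : M'' is a maximum matching of E ∪ Ehat missing an Ehat edge
    obtain ⟨g, hg⟩ := Finset.card_eq_one.1 hk
    have hgEhat : g ∈ Ehat := hEabsub (hg ▸ Finset.mem_singleton_self g)
    have hM''max : IsMaxMatching (E ∪ Ehat) M'' := by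
      refine ⟨hM''sub, hm'', fun K hK hKm => ?_⟩
      have : K.card ≤ mu (E ∪ Ehat) := card_le_mu hK hKm
      omega
    have hgM'' : g ∈ M'' := ehat_subset_of_max hmin M'' hM''max hgEhat
    rcases Finset.mem_union.1 hgM'' with h | h
    · exact hdisj g hgEhat (hA'E h)
    · exact (Finset.mem_sdiff.1 h).2 (hg ▸ Finset.mem_singleton_self g)
  · -- 2 displaced : contradiction with the strong benefit guarantee
    have hEa1 : Ea.card = 1 := by
      have := Finset.card_union_le Ea Eb
      omega
    have hEb1 : Eb.card = 1 := by
      have := Finset.card_union_le Ea Eb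
      omega
    obtain ⟨ga, hga⟩ := Finset.card_eq_one.1 hEa1
    obtain ⟨gb, hgb⟩ := Finset.card_eq_one.1 hEb1
    have hgaEa : ga ∈ Ea := hga ▸ Finset.mem_singleton_self ga
    have hgbEb : gb ∈ Eb := hgb ▸ Finset.mem_singleton_self gb
    have hgaE : ga ∈ Ehat := (Finset.mem_filter.1 hgaEa).1
    have hgbE : gb ∈ Ehat := (Finset.mem_filter.1 hgbEb).1
    have hga1 : ga.1 = a := (Finset.mem_filter.1 hgaEa).2
    have hgb2 : gb.2 = b := (Finset.mem_filter.1 hgbEb).2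
    have hgagb : ga ≠ gb := by
      intro hEq
      have hsing : Ea ∪ Eb = {ga} := by
        rw [hga, hgb, hEq]
        simp
      rw [hsing] at hk
      simp at hk
    -- mu of the graph with ga removed
    have hmuerase : mu (E ∪ Ehat.erase ga) = M.card - 1 := by
      have hub := hmin ga hgaE
      have hlb : M.card - 1 ≤ mu (E ∪ Ehat.erase ga) := by
        have hsubM : M.erase ga ⊆ E ∪ Ehat.erase ga := by
          intro p hp
          obtain ⟨hpga, hpM⟩ := Finset.mem_erase.1 hp
          rcases Finset.mem_union.1 (hM.1 hpM) with h | h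
          · exact Finset.mem_union_left _ h
          · exact Finset.mem_union_right _ (Finset.mem_erase.2 ⟨hpga, h⟩)
        have := card_le_mu hsubM (matching_mono hM.2.1 (Finset.erase_subset _ _))
        rw [Finset.card_erase_of_mem (hEhatM hgaE)] at this
        exact this
      omega
    have hM''sub' : M'' ⊆ E ∪ Ehat.erase ga := by
      intro p hp
      rcases Finset.mem_union.1 hp with h | h
      · exact Finset.mem_union_left _ (hA'E h)
      · obtain ⟨hpE, hpn⟩ := Finset.mem_sdiff.1 h
        refine Finset.mem_union_right _ (Finset.mem_erase.2 ⟨?_, hpE⟩)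
        intro hEq
        exact hpn (Finset.mem_union_left _ (hEq ▸ hgaEa))
    have hM''max : IsMaxMatching (E ∪ Ehat.erase ga) M'' := by
      refine ⟨hM''sub', hm'', fun K hK hKm => ?_⟩
      have h1 : K.card ≤ mu (E ∪ Ehat.erase ga) := card_le_mu hK hKm
      omega
    have hgbmem : gb ∈ Ehat.erase ga := Finset.mem_erase.2 ⟨fun h => hgagb h.symm, hgbE⟩
    obtain ⟨y, hy⟩ := hSB (Ehat.erase ga) (Finset.erase_subset _ _) gb hgbmem M'' hM''max
    -- (gb.1, y) ∈ M'' : derive a contradiction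
    rcases Finset.mem_union.1 hy with h | h
    · have hp1 : gb.1 ∈ insert a ((M \ Ehat).image Prod.fst) := by
        rw [← hXeq]
        exact Finset.mem_image.2 ⟨(gb.1, y), h, rfl⟩
      rcases Finset.mem_insert.1 hp1 with h' | h'
      · exact hgagb (hM.2.1.1 ga (hEhatM hgaE) gb (hEhatM hgbE) (by rw [hga1, h']))
      · obtain ⟨r, hr, hrq⟩ := Finset.mem_image.1 h'
        exact hshare1 gb hgbE r hr hrq.symm
    · obtain ⟨hqE, hqn⟩ := Finset.mem_sdiff.1 h
      have heq : (gb.1, y) = gb := hmEhat.1 (gb.1, y) hqE gb hgbE rfl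
      rw [heq] at hqn
      exact hqn (Finset.mem_union_right _ hgbEb)
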